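/- Let p > 1, n ≥ 1, D > 0, and j ≥ 1. Define ψ(x,t) = j((p-1)/p)|x|^{p/(p-1)} + j^{p-1}(n/(2D)) t². Then for all x ≠ 0 and all t with |t| ≤ D: ∂_t ψ(x,t) - Δ_p ψ(x,t) = j^{p-1} n t/D - j^{p-1} n ≤ 0, i.e. ψ is a classical subsolution of the p-parabolic equation on {(x,t) : x ≠ 0, |t| ≤ D}. -/

import Mathlib

/-- The nonlinear vector field `|∇u|^{p-2} ∇u` of a scalar function. -/
noncomputable def pField (p : ℝ) {n : ℕ} (u : EuclideanSpace ℝ (Fin n) → ℝ)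
    (x : EuclideanSpace ℝ (Fin n)) : EuclideanSpace ℝ (Fin n) :=
  ‖gradient u x‖ ^ (p - 2) • gradient u x

/-- The `p`-Laplacian `Δ_p u(x) = div(|∇u|^{p-2}∇u)(x)`. -/
noncomputable def pLaplacian (p : ℝ) {n : ℕ} (u : EuclideanSpace ℝ (Fin n) → ℝ)
    (x : EuclideanSpace ℝ (Fin n)) : ℝ :=
  ∑ i, fderiv ℝ (pField p u) x (EuclideanSpace.single i 1) i

/-! With `q = p/(p-1)` the conjugate exponent, the spatial part `u = j (1/q) |x|^q` has gradient
`j |x|^{q-2} x`, whose length `j |x|^{1/(p-1)}` raised to the power `p - 2` exactly cancels the radial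
factor: `|∇u|^{p-2} ∇u = j^{p-1} x` on the open set `x ≠ 0`, so `Δ_p u = n j^{p-1}` there. The time
part contributes `∂_t ψ = j^{p-1} n t / D`, which is at most `j^{p-1} n` once `t ≤ D`. -/

open InnerProductSpace Filter Topology

noncomputable def radialPotential {E : Type*} [NormedAddCommGroup E] (p j : ℝ) (z : E) : ℝ :=
  j * ((p - 1) / p) * ‖z‖ ^ (p / (p - 1))

theorem hasGradientAt_radialPotential {E : Type*} [NormedAddCommGroup E] [InnerProductSpace ℝ E]
    [CompleteSpace E] {p : ℝ} (hp : 1 < p) (j C : ℝ) (y : E) :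
    HasGradientAt (fun z ↦ radialPotential p j z + C)
      ((j * ‖y‖ ^ ((2 - p) / (p - 1))) • y) y := by
  have hq : 1 < p / (p - 1) := by rw [one_lt_div] <;> linarith
  rw [hasGradientAt_iff_hasFDerivAt]
  refine (((hasFDerivAt_norm_rpow y hq).const_mul (j * ((p - 1) / p))).add_const C).congr_fderiv ?_
  have hp1 : p - 1 ≠ 0 := by linarith
  have hexp : p / (p - 1) - 2 = (2 - p) / (p - 1) := by field_simp; ring
  ext w
  simp only [toDual_apply_apply, smul_apply, innerSL_apply_apply, smul_eq_mul,
    real_inner_smul_left, hexp]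
  field_simp

theorem pField_eq_smul_of_gradient_eq {p j : ℝ} (hp : 1 < p) (hj : 0 ≤ j) {n : ℕ}
    {u : EuclideanSpace ℝ (Fin n) → ℝ} {y : EuclideanSpace ℝ (Fin n)} (hy : y ≠ 0)
    (h : gradient u y = (j * ‖y‖ ^ ((2 - p) / (p - 1))) • y) :
    pField p u y = j ^ (p - 1) • y := by
  have hs : 0 < ‖y‖ := norm_pos_iff.mpr hy
  have hp1 : p - 1 ≠ 0 := by linarith
  have hnorm : ‖gradient u y‖ = j * ‖y‖ ^ (1 / (p - 1)) := by
    have hexp : (2 - p) / (p - 1) + 1 = 1 / (p - 1) := by field_simp; ring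
    rw [h, norm_smul, Real.norm_of_nonneg (by positivity), mul_assoc,
      ← Real.rpow_add_one hs.ne', hexp]
  rw [pField, hnorm, h, smul_smul]
  congr 1
  calc (j * ‖y‖ ^ (1 / (p - 1))) ^ (p - 2) * (j * ‖y‖ ^ ((2 - p) / (p - 1)))
      = (j ^ (p - 2) * j ^ (1 : ℝ)) *
          (‖y‖ ^ (1 / (p - 1) * (p - 2)) * ‖y‖ ^ ((2 - p) / (p - 1))) := by
        rw [Real.mul_rpow hj (by positivity), ← Real.rpow_mul hs.le, Real.rpow_one]; ring
    _ = j ^ (p - 2 + 1) * ‖y‖ ^ (1 / (p - 1) * (p - 2) + (2 - p) / (p - 1)) := by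
        rw [Real.rpow_add' hj (by linarith), Real.rpow_add hs]
    _ = j ^ (p - 1) := by
        rw [show 1 / (p - 1) * (p - 2) + (2 - p) / (p - 1) = 0 by field_simp; ring,
          Real.rpow_zero, mul_one, show p - 2 + 1 = p - 1 by ring]

theorem pLaplacian_eq_of_pField_eventuallyEq_smul {p c : ℝ} {n : ℕ}
    {u : EuclideanSpace ℝ (Fin n) → ℝ} {x : EuclideanSpace ℝ (Fin n)}
    (h : pField p u =ᶠ[𝓝 x] fun y ↦ c • y) :
    pLaplacian p u x = n * c := by
  have hfd : fderiv ℝ (pField p u) x = c • ContinuousLinearMap.id ℝ _ :=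
    h.fderiv_eq.trans ((hasFDerivAt_id x).const_smul c).fderiv
  simp [pLaplacian, hfd]

theorem pLaplacian_radialPotential {p : ℝ} (hp : 1 < p) {j : ℝ} (hj : 0 ≤ j) (C : ℝ) {n : ℕ}
    {x : EuclideanSpace ℝ (Fin n)} (hx : x ≠ 0) :
    pLaplacian p (fun z ↦ radialPotential p j z + C) x = n * j ^ (p - 1) := by
  refine pLaplacian_eq_of_pField_eventuallyEq_smul ?_
  filter_upwards [isOpen_compl_singleton.mem_nhds hx] with y hy
  exact pField_eq_smul_of_gradient_eq hp hj hy (hasGradientAt_radialPotential hp j C y).gradient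

theorem stmt18_general (p : ℝ) (hp : 1 < p) (n : ℕ)
    (D j : ℝ) (hD : 0 < D) (hj : 1 ≤ j)
    (ψ : EuclideanSpace ℝ (Fin n) → ℝ → ℝ)
    (hψ : ∀ x t, ψ x t =
      j * ((p - 1) / p) * ‖x‖ ^ (p / (p - 1)) + j ^ (p - 1) * (n / (2 * D)) * t ^ 2)
    (x : EuclideanSpace ℝ (Fin n)) (hx : x ≠ 0) (t : ℝ) (ht : |t| ≤ D) :
    deriv (ψ x) t - pLaplacian p (fun y => ψ y t) x = j ^ (p - 1) * n * t / D - j ^ (p - 1) * n ∧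
    j ^ (p - 1) * n * t / D - j ^ (p - 1) * n ≤ 0 := by
  have hdt : deriv (ψ x) t = j ^ (p - 1) * (n / (2 * D)) * (2 * t) := by
    simp [funext (hψ x), mul_comm]
  have hlap : pLaplacian p (fun y ↦ ψ y t) x = n * j ^ (p - 1) := by
    simpa only [hψ, radialPotential] using pLaplacian_radialPotential hp (by linarith) _ hx
  refine ⟨by rw [hdt, hlap]; field_simp, ?_⟩
  have htD : t / D ≤ 1 := (div_le_one hD).mpr (le_of_abs_le ht)
  have hc : 0 ≤ j ^ (p - 1) * n := by positivity
  calc j ^ (p - 1) * n * t / D - j ^ (p - 1) * n = j ^ (p - 1) * n * (t / D - 1) := by ring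
    _ ≤ 0 := mul_nonpos_of_nonneg_of_nonpos hc (by linarith)

theorem stmt18 (p : ℝ) (hp : 1 < p) (n : ℕ) (hn : 1 ≤ n)
    (D j : ℝ) (hD : 0 < D) (hj : 1 ≤ j)
    (ψ : EuclideanSpace ℝ (Fin n) → ℝ → ℝ)
    (hψ : ∀ x t, ψ x t =
      j * ((p - 1) / p) * ‖x‖ ^ (p / (p - 1)) + j ^ (p - 1) * (n / (2 * D)) * t ^ 2)
    (x : EuclideanSpace ℝ (Fin n)) (hx : x ≠ 0) (t : ℝ) (ht : |t| ≤ D) :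
    deriv (ψ x) t - pLaplacian p (fun y => ψ y t) x = j ^ (p - 1) * n * t / D - j ^ (p - 1) * n ∧
    j ^ (p - 1) * n * t / D - j ^ (p - 1) * n ≤ 0 :=
  stmt18_general p hp n D j hD hj ψ hψ x hx t ht
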